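/- arXiv:2512.23250 — 4 statements merged into one kernel-verified Lean document; each statement's English description precedes it below -/
import Mathlib

section
/- (Deterministic core of Theorem 1.) Let κ ≥ 1, λ ≥ 0, and let Σ* be a real symmetric p×p matrix with Σ* ∈ D_κ whose set of nonzero off-diagonal entries has cardinality at most s. Let Σ̃ be a real symmetric p×p matrix with max_{i,j} |Σ̃_{ij} − Σ*_{ij}| ≤ λ, and let Σ̂ be a minimizer over D_κ of F(Σ) = (1/2)‖Σ − Σ̃‖_F² + λ‖Σ‖_{1,off}. Then ‖Σ̂ − Σ*‖_F ≤ 2λ(2√s + √p). -/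
open Matrix BigOperators

/-- Frobenius norm of a real matrix. -/
noncomputable def frobNorm {p : ℕ} (A : Matrix (Fin p) (Fin p) ℝ) : ℝ :=
  Real.sqrt (∑ i, ∑ j, (A i j) ^ 2)

/-- Off-diagonal ℓ1 norm of a real matrix. -/
noncomputable def offL1 {p : ℕ} (A : Matrix (Fin p) (Fin p) ℝ) : ℝ :=
  ∑ i, ∑ j, if i ≠ j then |A i j| else 0

/-- The set `D_κ` of real symmetric positive semidefinite `p × p` matrices whose largest
eigenvalue is at most `κ` times their smallest eigenvalue. -/
noncomputable def Dset (κ : ℝ) (p : ℕ) : Set (Matrix (Fin p) (Fin p) ℝ) :=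
  {A | ∃ h : A.PosSemidef, (⨆ i, h.1.eigenvalues i) ≤ κ * (⨅ i, h.1.eigenvalues i)}

/-!
Write `Δ = Σ̂ - Σ*` and `E = Σ̃ - Σ*`. Comparing the objective at `Σ̂` with its value at the
feasible point `Σ*` gives the basic inequality `½‖Δ‖² ≤ ⟨Δ, E⟩ + λ(‖Σ*‖_{1,off} - ‖Σ̂‖_{1,off})`.
Entrywise, `Δᵢⱼ Eᵢⱼ ≤ λ|Δᵢⱼ|`, while the penalty difference is `-λ|Δᵢⱼ|` off the support of `Σ*`
and at most `λ|Δᵢⱼ|` on it, so `½‖Δ‖² ≤ λ ∑ wᵢⱼ |Δᵢⱼ|` with `w = supportWeight Σ*`, which is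
`1` on the diagonal, `2` on the support and `0` elsewhere. Cauchy–Schwarz bounds the right side by
`λ √(p + 4s) ‖Δ‖ ≤ λ (√p + 2√s) ‖Δ‖`, and dividing by `‖Δ‖` finishes.
-/

lemma Real.sqrt_add_le_add_sqrt {x y : ℝ} (hx : 0 ≤ x) (hy : 0 ≤ y) :
    √(x + y) ≤ √x + √y := by
  refine Real.sqrt_le_iff.mpr ⟨by positivity, ?_⟩
  nlinarith [Real.sq_sqrt hx, Real.sq_sqrt hy, Real.sqrt_nonneg x, Real.sqrt_nonneg y]

section

variable {p : ℕ}

lemma frobNorm_nonneg (A : Matrix (Fin p) (Fin p) ℝ) : 0 ≤ frobNorm A :=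
  Real.sqrt_nonneg _

lemma frobNorm_sq (A : Matrix (Fin p) (Fin p) ℝ) :
    frobNorm A ^ 2 = ∑ i, ∑ j, A i j ^ 2 :=
  Real.sq_sqrt (by positivity)

lemma sum_mul_abs_le_frobNorm_mul_frobNorm (A B : Matrix (Fin p) (Fin p) ℝ) :
    ∑ i, ∑ j, A i j * |B i j| ≤ frobNorm A * frobNorm B := by
  simp only [frobNorm, ← Fintype.sum_prod_type']
  simpa only [sq_abs] using
    Real.sum_mul_le_sqrt_mul_sqrt _ _ fun ij : Fin p × Fin p => |B ij.1 ij.2|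

noncomputable def supportWeight (S : Matrix (Fin p) (Fin p) ℝ) :
    Matrix (Fin p) (Fin p) ℝ :=
  Matrix.of fun i j => if i = j then 1 else if S i j = 0 then 0 else 2

lemma sum_supportWeight_sq (S : Matrix (Fin p) (Fin p) ℝ) :
    ∑ i, ∑ j, supportWeight S i j ^ 2 =
      p + 4 * Set.ncard {ij : Fin p × Fin p | ij.1 ≠ ij.2 ∧ S ij.1 ij.2 ≠ 0} := by
  classical
  have hsq : ∀ i j, supportWeight S i j ^ 2 =
      (if i = j then 1 else 0) + 4 * (if i ≠ j ∧ S i j ≠ 0 then 1 else 0) := by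
    intro i j
    simp only [supportWeight, of_apply]
    split_ifs <;> grind
  simp only [hsq, Finset.sum_add_distrib, ← Finset.mul_sum, Finset.sum_ite_eq, Finset.mem_univ,
    if_true, Finset.sum_const, Finset.card_univ, Fintype.card_fin, nsmul_eq_mul, mul_one]
  rw [Set.ncard_eq_toFinset_card',
    ← Fintype.sum_prod_type' (f := fun i j => if i ≠ j ∧ S i j ≠ 0 then (1 : ℝ) else 0)]
  simp [Finset.sum_boole]

lemma frobNorm_supportWeight_le {s : ℕ} (S : Matrix (Fin p) (Fin p) ℝ)
    (hsparse : Set.ncard {ij : Fin p × Fin p | ij.1 ≠ ij.2 ∧ S ij.1 ij.2 ≠ 0} ≤ s) :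
    frobNorm (supportWeight S) ≤ √p + 2 * √s := by
  have h4 : √4 = 2 := by
    rw [show (4 : ℝ) = 2 ^ 2 by norm_num, Real.sqrt_sq zero_le_two]
  calc frobNorm (supportWeight S) ≤ √(p + 4 * s) := by
        rw [frobNorm, sum_supportWeight_sq]
        gcongr
    _ ≤ √p + √(4 * s) := Real.sqrt_add_le_add_sqrt (by positivity) (by positivity)
    _ = √p + 2 * √s := by rw [Real.sqrt_mul zero_le_four, h4]

lemma mul_le_mul_abs_of_abs_le {d e lam : ℝ} (he : |e| ≤ lam) : d * e ≤ lam * |d| :=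
  calc d * e ≤ |d| * |e| := (le_abs_self _).trans (abs_mul d e).le
    _ ≤ lam * |d| := by rw [mul_comm]; exact mul_le_mul_of_nonneg_right he (abs_nonneg d)

lemma half_sq_sub_le_entry {lam : ℝ} (Sstar Stilde Shat : Matrix (Fin p) (Fin p) ℝ)
    (i j : Fin p) (hclose : |Stilde i j - Sstar i j| ≤ lam) :
    (1 / 2) * (Shat i j - Sstar i j) ^ 2 ≤
      ((1 / 2) * (Shat i j - Stilde i j) ^ 2 + lam * (if i ≠ j then |Shat i j| else 0)) -
        ((1 / 2) * (Sstar i j - Stilde i j) ^ 2 + lam * (if i ≠ j then |Sstar i j| else 0)) +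
        lam * supportWeight Sstar i j * |Shat i j - Sstar i j| := by
  have hlam : 0 ≤ lam := (abs_nonneg _).trans hclose
  have hcross := mul_le_mul_abs_of_abs_le (d := Shat i j - Sstar i j) hclose
  by_cases hij : i = j
  · subst hij
    simp only [supportWeight, ne_eq, not_true_eq_false, if_false, of_apply, if_true]
    nlinarith
  by_cases hS : Sstar i j = 0
  · simp only [supportWeight, hij, hS, ne_eq, not_false_eq_true, if_true, if_false, of_apply,
      abs_zero, sub_zero] at hcross ⊢
    nlinarith
  · have hpen := abs_sub_abs_le_abs_sub (Sstar i j) (Shat i j)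
    rw [abs_sub_comm] at hpen
    simp only [supportWeight, hij, hS, ne_eq, not_false_eq_true, if_true, if_false, of_apply]
    nlinarith

lemma half_frobNorm_sq_le_of_objective_le {lam : ℝ}
    {Sstar Stilde Shat : Matrix (Fin p) (Fin p) ℝ}
    (hclose : ∀ i j, |Stilde i j - Sstar i j| ≤ lam)
    (hopt : (1 / 2) * (frobNorm (Shat - Stilde)) ^ 2 + lam * offL1 Shat ≤
      (1 / 2) * (frobNorm (Sstar - Stilde)) ^ 2 + lam * offL1 Sstar) :
    (1 / 2) * frobNorm (Shat - Sstar) ^ 2 ≤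
      lam * ∑ i, ∑ j, supportWeight Sstar i j * |(Shat - Sstar) i j| := by
  have hentry : (1 / 2) * frobNorm (Shat - Sstar) ^ 2 ≤
      ((1 / 2) * (frobNorm (Shat - Stilde)) ^ 2 + lam * offL1 Shat) -
        ((1 / 2) * (frobNorm (Sstar - Stilde)) ^ 2 + lam * offL1 Sstar) +
        lam * ∑ i, ∑ j, supportWeight Sstar i j * |(Shat - Sstar) i j| := by
    simp only [frobNorm_sq, offL1, Matrix.sub_apply, Finset.mul_sum, ← Finset.sum_add_distrib,
      ← Finset.sum_sub_distrib, ← mul_assoc]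
    gcongr with i _ j _
    exact half_sq_sub_le_entry Sstar Stilde Shat i j (hclose i j)
  linarith

end

theorem stmt2_general (p s : ℕ) (κ lam : ℝ) (hlam : 0 ≤ lam)
    (Sstar Stilde Shat : Matrix (Fin p) (Fin p) ℝ)
    (hSstarD : Sstar ∈ Dset κ p)
    (hsparse : Set.ncard {ij : Fin p × Fin p | ij.1 ≠ ij.2 ∧ Sstar ij.1 ij.2 ≠ 0} ≤ s)
    (hclose : ∀ i j, |Stilde i j - Sstar i j| ≤ lam)
    (hmin : ∀ S ∈ Dset κ p,
      (1 / 2) * (frobNorm (Shat - Stilde)) ^ 2 + lam * offL1 Shat ≤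
        (1 / 2) * (frobNorm (S - Stilde)) ^ 2 + lam * offL1 S) :
    frobNorm (Shat - Sstar) ≤ 2 * lam * (2 * Real.sqrt s + Real.sqrt p) := by
  have hbasic := half_frobNorm_sq_le_of_objective_le hclose (hmin Sstar hSstarD)
  have hcs := sum_mul_abs_le_frobNorm_mul_frobNorm (supportWeight Sstar) (Shat - Sstar)
  have hweight := frobNorm_supportWeight_le Sstar hsparse
  have hΔ := frobNorm_nonneg (Shat - Sstar)
  have hsq : frobNorm (Shat - Sstar) ^ 2 ≤
      2 * lam * (2 * √s + √p) * frobNorm (Shat - Sstar) := by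
    calc frobNorm (Shat - Sstar) ^ 2
        ≤ 2 * lam * (frobNorm (supportWeight Sstar) * frobNorm (Shat - Sstar)) := by
          linarith [mul_le_mul_of_nonneg_left hcs hlam]
      _ ≤ 2 * lam * ((√p + 2 * √s) * frobNorm (Shat - Sstar)) := by gcongr
      _ = 2 * lam * (2 * √s + √p) * frobNorm (Shat - Sstar) := by ring
  have hrhs : 0 ≤ 2 * lam * (2 * √s + √p) := by positivity
  nlinarith

/-- Deterministic core of Theorem 1: if the pilot estimator is entrywise `λ`-close to the
truth `Σ*` (a member of `D_κ` with at most `s` nonzero off-diagonal entries), then any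
minimizer of the RWS objective over `D_κ` satisfies `‖Σ̂ − Σ*‖_F ≤ 2λ(2√s + √p)`. -/
theorem stmt2 (p s : ℕ) (κ lam : ℝ) (hκ : 1 ≤ κ) (hlam : 0 ≤ lam)
    (Sstar Stilde Shat : Matrix (Fin p) (Fin p) ℝ)
    (hSstarSym : Sstar.IsHermitian) (hSstarD : Sstar ∈ Dset κ p)
    (hsparse : Set.ncard {ij : Fin p × Fin p | ij.1 ≠ ij.2 ∧ Sstar ij.1 ij.2 ≠ 0} ≤ s)
    (hStildeSym : Stilde.IsHermitian)
    (hclose : ∀ i j, |Stilde i j - Sstar i j| ≤ lam)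
    (hmem : Shat ∈ Dset κ p)
    (hmin : ∀ S ∈ Dset κ p,
      (1 / 2) * (frobNorm (Shat - Stilde)) ^ 2 + lam * offL1 Shat ≤
        (1 / 2) * (frobNorm (S - Stilde)) ^ 2 + lam * offL1 S) :
    frobNorm (Shat - Sstar) ≤ 2 * lam * (2 * Real.sqrt s + Real.sqrt p) :=
  stmt2_general p s κ lam hlam Sstar Stilde Shat hSstarD hsparse hclose hmin
end

section
/- (Diagonal form of Proposition 1, case γ̂_p > 0 and γ̂₁/γ̂_p > κ.) Let κ ≥ 1 and let γ̂₁ ≥ γ̂₂ ≥ … ≥ γ̂_p > 0 be real numbers with γ̂₁ > κ·γ̂_p. Suppose integers α, β with 1 ≤ α < β ≤ p and the real number ν* = ( κ·Σ_{i=1}^{α} γ̂ᵢ + Σ_{i=β}^{p} γ̂ᵢ ) / ( α·κ² + p − β + 1 ) satisfy γ̂_α ≥ κ·ν* > γ̂_{α+1} and γ̂_{β−1} > ν* ≥ γ̂_β. Define x* ∈ ℝ^p by x*ᵢ = κ·ν* for 1 ≤ i ≤ α, x*ᵢ = γ̂ᵢ for α < i < β, and x*ᵢ = ν* for β ≤ i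 ≤ p. Then for every x ∈ ℝ^p with xᵢ > 0 for all i and max_i xᵢ ≤ κ·min_i xᵢ, one has Σ_{i=1}^{p} (x*ᵢ − γ̂ᵢ)² ≤ Σ_{i=1}^{p} (xᵢ − γ̂ᵢ)². -/
open BigOperators Finset

/-!
`x*` satisfies the variational inequality `⟨x* − γ̂, x − x*⟩ ≥ 0` for every feasible `x`, which
gives `‖x − γ̂‖² = ‖x* − γ̂‖² + 2⟨x* − γ̂, x − x*⟩ + ‖x − x*‖² ≥ ‖x* − γ̂‖²`. For the inequality,
let `m = min x`. The middle block contributes nothing. On the top block `x*ᵢ − γ̂ᵢ ≤ 0` and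
`xᵢ ≤ κ m`, on the bottom block `x*ᵢ − γ̂ᵢ ≥ 0` and `xᵢ ≥ m`, so the inner product is at least
`(m − ν*) (ν* (α κ² + p − β + 1) − κ Σ_{i ≤ α} γ̂ᵢ − Σ_{i ≥ β} γ̂ᵢ)`, and the second factor
vanishes by the choice of `ν*`.
-/

theorem sum_sq_sub_le_of_sum_mul_nonneg {ι : Type*} (s : Finset ι) (g y x : ι → ℝ)
    (h : 0 ≤ ∑ i ∈ s, (y i - g i) * (x i - y i)) :
    ∑ i ∈ s, (y i - g i) ^ 2 ≤ ∑ i ∈ s, (x i - g i) ^ 2 := by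
  have hexpand : ∀ i, (x i - g i) ^ 2
      = (y i - g i) ^ 2 + 2 * ((y i - g i) * (x i - y i)) + (x i - y i) ^ 2 := fun i => by ring
  simp_rw [hexpand, sum_add_distrib, ← mul_sum]
  have hsq : 0 ≤ ∑ i ∈ s, (x i - y i) ^ 2 := sum_nonneg fun i _ => sq_nonneg _
  linarith

theorem le_sum_sub_mul_sub_of_ge_of_le {ι : Type*} (s : Finset ι) {γ x : ι → ℝ} {c M : ℝ}
    (hγ : ∀ i ∈ s, c ≤ γ i) (hx : ∀ i ∈ s, x i ≤ M) :
    (#s * c - ∑ i ∈ s, γ i) * (M - c) ≤ ∑ i ∈ s, (c - γ i) * (x i - c) := by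
  rw [← nsmul_eq_mul, ← sum_const, ← sum_sub_distrib, sum_mul]
  exact sum_le_sum fun i hi =>
    mul_le_mul_of_nonpos_left (by linarith [hx i hi]) (by linarith [hγ i hi])

theorem le_sum_sub_mul_sub_of_le_of_ge {ι : Type*} (s : Finset ι) {γ x : ι → ℝ} {c m : ℝ}
    (hγ : ∀ i ∈ s, γ i ≤ c) (hx : ∀ i ∈ s, m ≤ x i) :
    (#s * c - ∑ i ∈ s, γ i) * (m - c) ≤ ∑ i ∈ s, (c - γ i) * (x i - c) := by
  rw [← nsmul_eq_mul, ← sum_const, ← sum_sub_distrib, sum_mul]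
  exact sum_le_sum fun i hi =>
    mul_le_mul_of_nonneg_left (by linarith [hx i hi]) (by linarith [hγ i hi])

theorem sum_Icc_one_eq_add_sum_Ioo_add {M : Type*} [AddCommMonoid M] (f : ℕ → M) {a b p : ℕ}
    (hab : a < b) (hbp : b ≤ p + 1) :
    ∑ i ∈ Icc 1 p, f i = ∑ i ∈ Icc 1 a, f i + ∑ i ∈ Ioo a b, f i + ∑ i ∈ Icc b p, f i := by
  rw [← Ico_add_one_right_eq_Icc, ← Ico_add_one_right_eq_Icc, ← Ico_add_one_right_eq_Icc,
    ← Ico_add_one_left_eq_Ioo, sum_Ico_consecutive f (by omega) (by omega : a + 1 ≤ b),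
    sum_Ico_consecutive f (by omega) hbp]

theorem sum_clipped_sub_mul_sub_nonneg (p α β : ℕ) (κ ν : ℝ) (γ xstar x : ℕ → ℝ)
    (hαβ : α < β) (hβp : β ≤ p)
    (hν : ν * ((α : ℝ) * κ ^ 2 + (p : ℝ) - (β : ℝ) + 1)
      = κ * (∑ i ∈ Icc 1 α, γ i) + ∑ i ∈ Icc β p, γ i)
    (htop : ∀ i ∈ Icc 1 α, κ * ν ≤ γ i) (hbot : ∀ i ∈ Icc β p, γ i ≤ ν)
    (hxstar : ∀ i, 1 ≤ i → i ≤ p → xstar i = if i ≤ α then κ * ν else if i < β then γ i else ν)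
    (hx : ∀ i j, 1 ≤ i → i ≤ p → 1 ≤ j → j ≤ p → x i ≤ κ * x j) :
    0 ≤ ∑ i ∈ Icc 1 p, (xstar i - γ i) * (x i - xstar i) := by
  obtain ⟨i₀, hi₀, hmin⟩ := exists_min_image (Icc 1 p) x ⟨1, mem_Icc.2 ⟨le_rfl, by omega⟩⟩
  obtain ⟨hi₀1, hi₀p⟩ := mem_Icc.1 hi₀
  rw [sum_Icc_one_eq_add_sum_Ioo_add _ hαβ (by omega)]
  have hmid : ∑ i ∈ Ioo α β, (xstar i - γ i) * (x i - xstar i) = 0 :=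
    sum_eq_zero fun i hi => by
      obtain ⟨hαi, hiβ⟩ := mem_Ioo.1 hi
      rw [hxstar i (by omega) (by omega), if_neg (by omega), if_pos hiβ, sub_self, zero_mul]
  have hupper : (#(Icc 1 α) * (κ * ν) - ∑ i ∈ Icc 1 α, γ i) * (κ * x i₀ - κ * ν)
      ≤ ∑ i ∈ Icc 1 α, (xstar i - γ i) * (x i - xstar i) :=
    calc _ ≤ ∑ i ∈ Icc 1 α, (κ * ν - γ i) * (x i - κ * ν) :=
          le_sum_sub_mul_sub_of_ge_of_le _ htop fun i hi =>
            hx i i₀ (mem_Icc.1 hi).1 (by grind) hi₀1 hi₀p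
      _ = _ := sum_congr rfl fun i hi => by
          rw [hxstar i (mem_Icc.1 hi).1 (by grind), if_pos (mem_Icc.1 hi).2]
  have hlower : (#(Icc β p) * ν - ∑ i ∈ Icc β p, γ i) * (x i₀ - ν)
      ≤ ∑ i ∈ Icc β p, (xstar i - γ i) * (x i - xstar i) :=
    calc _ ≤ ∑ i ∈ Icc β p, (ν - γ i) * (x i - ν) :=
          le_sum_sub_mul_sub_of_le_of_ge _ hbot fun i hi =>
            hmin i (mem_Icc.2 ⟨by grind, (mem_Icc.1 hi).2⟩)
      _ = _ := sum_congr rfl fun i hi => by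
          rw [hxstar i (by grind) (mem_Icc.1 hi).2, if_neg (by grind), if_neg (by grind)]
  rw [Nat.card_Icc, Nat.add_sub_cancel] at hupper
  rw [Nat.card_Icc, Nat.cast_sub (by omega)] at hlower
  push_cast at hlower
  have hcancel : (α * (κ * ν) - ∑ i ∈ Icc 1 α, γ i) * (κ * x i₀ - κ * ν)
      + ((p + 1 - β) * ν - ∑ i ∈ Icc β p, γ i) * (x i₀ - ν) = 0 := by
    linear_combination (x i₀ - ν) * hν
  linarith

theorem stmt13_general (p : ℕ) (κ : ℝ) (γ : ℕ → ℝ)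
    (hdec : ∀ i j, 1 ≤ i → i ≤ j → j ≤ p → γ j ≤ γ i)
    (α β : ℕ) (hαβ : α < β) (hβp : β ≤ p)
    (νstar : ℝ)
    (hν : νstar = (κ * (∑ i ∈ Finset.Icc 1 α, γ i) + ∑ i ∈ Finset.Icc β p, γ i) /
      ((α : ℝ) * κ ^ 2 + (p : ℝ) - (β : ℝ) + 1))
    (hfenceα : κ * νstar ≤ γ α)
    (hfenceβ' : γ β ≤ νstar)
    (xstar : ℕ → ℝ)
    (hxstar : ∀ i, 1 ≤ i → i ≤ p →
      xstar i = if i ≤ α then κ * νstar else if i < β then γ i else νstar) :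
    ∀ x : ℕ → ℝ, (∀ i, 1 ≤ i → i ≤ p → 0 < x i) →
      (∀ i j, 1 ≤ i → i ≤ p → 1 ≤ j → j ≤ p → x i ≤ κ * x j) →
      ∑ i ∈ Finset.Icc 1 p, (xstar i - γ i) ^ 2 ≤ ∑ i ∈ Finset.Icc 1 p, (x i - γ i) ^ 2 := by
  intro x _ hx
  have hdenom : (0 : ℝ) < (α : ℝ) * κ ^ 2 + (p : ℝ) - (β : ℝ) + 1 := by
    have : (β : ℝ) ≤ p := by exact_mod_cast hβp
    have : 0 ≤ (α : ℝ) * κ ^ 2 := by positivity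
    linarith
  have htop : ∀ i ∈ Icc 1 α, κ * νstar ≤ γ i := fun i hi =>
    hfenceα.trans (hdec i α (mem_Icc.1 hi).1 (mem_Icc.1 hi).2 (by omega))
  have hbot : ∀ i ∈ Icc β p, γ i ≤ νstar := fun i hi =>
    (hdec β i (by omega) (mem_Icc.1 hi).1 (mem_Icc.1 hi).2).trans hfenceβ'
  refine sum_sq_sub_le_of_sum_mul_nonneg _ _ _ _
    (sum_clipped_sub_mul_sub_nonneg p α β κ νstar γ xstar x hαβ hβp ?_ htop hbot hxstar hx)
  rw [hν, div_mul_cancel₀ _ hdenom.ne']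

/-- Diagonal form of Proposition 1 (case `γ̂_p > 0`, `γ̂₁/γ̂_p > κ`): the vector `x*`
obtained by truncating the top `α` eigenvalues to `κν*` and the bottom `p − β + 1`
eigenvalues to `ν*` minimizes the squared distance to `(γ̂ᵢ)` over all positive vectors
whose largest entry is at most `κ` times the smallest. -/
theorem stmt13 (p : ℕ) (κ : ℝ) (hκ : 1 ≤ κ) (γ : ℕ → ℝ)
    (hdec : ∀ i j, 1 ≤ i → i ≤ j → j ≤ p → γ j ≤ γ i)
    (hpos : 0 < γ p) (hspread : κ * γ p < γ 1)
    (α β : ℕ) (hα1 : 1 ≤ α) (hαβ : α < β) (hβp : β ≤ p)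
    (νstar : ℝ)
    (hν : νstar = (κ * (∑ i ∈ Finset.Icc 1 α, γ i) + ∑ i ∈ Finset.Icc β p, γ i) /
      ((α : ℝ) * κ ^ 2 + (p : ℝ) - (β : ℝ) + 1))
    (hfenceα : κ * νstar ≤ γ α) (hfenceα' : γ (α + 1) < κ * νstar)
    (hfenceβ : νstar < γ (β - 1)) (hfenceβ' : γ β ≤ νstar)
    (xstar : ℕ → ℝ)
    (hxstar : ∀ i, 1 ≤ i → i ≤ p →
      xstar i = if i ≤ α then κ * νstar else if i < β then γ i else νstar) :
    ∀ x : ℕ → ℝ, (∀ i, 1 ≤ i → i ≤ p → 0 < x i) →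
      (∀ i j, 1 ≤ i → i ≤ p → 1 ≤ j → j ≤ p → x i ≤ κ * x j) →
      ∑ i ∈ Finset.Icc 1 p, (xstar i - γ i) ^ 2 ≤ ∑ i ∈ Finset.Icc 1 p, (x i - γ i) ^ 2 :=
  stmt13_general p κ γ hdec α β hαβ hβp νstar hν hfenceα hfenceβ' xstar hxstar
end

section
/- (Proposition 1, case γ̂_p > 0 and γ̂₁/γ̂_p > κ, matrix form.) Let κ ≥ 1 and let 𝒴 = U·diag(γ̂₁,…,γ̂_p)·Uᵀ be a real symmetric p×p matrix, where U is orthogonal and γ̂₁ ≥ γ̂₂ ≥ … ≥ γ̂_p > 0 with γ̂₁ > κ·γ̂_p. Suppose integers α, β with 1 ≤ α < β ≤ p and ν* = ( κ·Σ_{i=1}^{α} γ̂ᵢ + Σ_{i=β}^{p} γ̂ᵢ ) / ( α·κ² + p − β + 1 ) satisfy γ̂_α ≥ κ·ν* > γ̂_{α+1} and γ̂_{β−1} > ν* ≥ γ̂_β. Let Γ* = diag(κν*,…,κν*, γ̂_{α+1},…,γ̂_{β−1}, ν*,…,ν*) (with α leading entries κν* and p−β+1 trailing entries ν*) and Y*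 = U·Γ*·Uᵀ. Then Y* ∈ D_κ and ‖Y* − 𝒴‖_F ≤ ‖Y − 𝒴‖_F for every Y ∈ D_κ; that is, Y* is the projection of 𝒴 onto the condition-number-constrained positive semidefinite cone. -/
/-!
`Y*` is characterised by the variational inequality `⟨Y - Y*, Y* - 𝒴⟩ ≥ 0` for `Y ∈ D_κ`, which
gives `‖Y - 𝒴‖² ≥ ‖Y* - 𝒴‖²` after expanding the square. In the eigenbasis `U` of `𝒴` this
inner product is `∑ᵢ (zᵢ - cᵢ)(cᵢ - γ̂ᵢ)`, where `zᵢ` and `cᵢ` are the diagonal entries of `UᵀYU`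
and `Γ*`. If `m` is the smallest eigenvalue of `Y` then `m ≤ zᵢ ≤ κm`, so each term is at least
`(ν* - m) wᵢ` with `wᵢ = κ(γ̂ᵢ - κν*)` for `i ≤ α`, `wᵢ = γ̂ᵢ - ν*` for `i ≥ β` and `wᵢ = 0` in
between; the formula for `ν*` says exactly that `∑ wᵢ = 0`.
-/

open Matrix BigOperators Finset

open scoped MatrixOrder

section LoewnerOrder

variable {n : Type*}

theorem Matrix.IsHermitian.smul_one_le_iff [Fintype n] [DecidableEq n] {A : Matrix n n ℝ}
    (hA : A.IsHermitian) (c : ℝ) : c • (1 : Matrix n n ℝ) ≤ A ↔ ∀ i, c ≤ hA.eigenvalues i := by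
  rw [← Algebra.algebraMap_eq_smul_one, algebraMap_le_iff_le_spectrum hA.isSelfAdjoint,
    hA.spectrum_real_eq_range_eigenvalues, Set.forall_mem_range]

theorem Matrix.IsHermitian.le_smul_one_iff [Fintype n] [DecidableEq n] {A : Matrix n n ℝ}
    (hA : A.IsHermitian) (c : ℝ) : A ≤ c • (1 : Matrix n n ℝ) ↔ ∀ i, hA.eigenvalues i ≤ c := by
  rw [← Algebra.algebraMap_eq_smul_one, le_algebraMap_iff_spectrum_le hA.isSelfAdjoint,
    hA.spectrum_real_eq_range_eigenvalues, Set.forall_mem_range]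

theorem Matrix.diag_le_diag_of_le {A B : Matrix n n ℝ} (h : A ≤ B) (i : n) : A i i ≤ B i i :=
  sub_nonneg.mp (by simpa using (Matrix.le_iff.mp h).diag_nonneg (i := i))

theorem Matrix.smul_one_le_diagonal [DecidableEq n] {d : n → ℝ} {c : ℝ} (h : ∀ i, c ≤ d i) :
    c • (1 : Matrix n n ℝ) ≤ diagonal d := by
  rw [Matrix.le_iff, smul_one_eq_diagonal, diagonal_sub, posSemidef_diagonal_iff]
  exact fun i => sub_nonneg.mpr (h i)

theorem Matrix.diagonal_le_smul_one [DecidableEq n] {d : n → ℝ} {c : ℝ} (h : ∀ i, d i ≤ c) :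
    diagonal d ≤ c • (1 : Matrix n n ℝ) := by
  rw [Matrix.le_iff, smul_one_eq_diagonal, diagonal_sub, posSemidef_diagonal_iff]
  exact fun i => sub_nonneg.mpr (h i)

theorem Matrix.smul_one_le_transpose_mul_mul [Fintype n] [DecidableEq n] {U A : Matrix n n ℝ}
    (hU : U ∈ orthogonalGroup n ℝ) {c : ℝ} (h : c • 1 ≤ A) : c • 1 ≤ Uᵀ * A * U := by
  simpa [star_eq_conjTranspose, (mem_orthogonalGroup_iff' n ℝ).mp hU] using
    star_left_conjugate_le_conjugate h U

theorem Matrix.transpose_mul_mul_le_smul_one [Fintype n] [DecidableEq n] {U A : Matrix n n ℝ}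
    (hU : U ∈ orthogonalGroup n ℝ) {c : ℝ} (h : A ≤ c • 1) : Uᵀ * A * U ≤ c • 1 := by
  simpa [star_eq_conjTranspose, (mem_orthogonalGroup_iff' n ℝ).mp hU] using
    star_left_conjugate_le_conjugate h U

end LoewnerOrder

section FrobeniusInner

variable {n : Type*} [Fintype n]

theorem Matrix.sum_mul_eq_trace_transpose_mul (A B : Matrix n n ℝ) :
    ∑ i, ∑ j, A i j * B i j = trace (Aᵀ * B) := by
  simp only [trace, Matrix.diag, mul_apply, transpose_apply]
  exact Finset.sum_comm

theorem Matrix.sum_mul_conj_diagonal [DecidableEq n] {U : Matrix n n ℝ}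
    (hU : U ∈ orthogonalGroup n ℝ) (A : Matrix n n ℝ) (d : n → ℝ) :
    ∑ i, ∑ j, (U * A * Uᵀ) i j * (U * diagonal d * Uᵀ) i j = ∑ i, A i i * d i := by
  have hUU : Uᵀ * U = 1 := (mem_orthogonalGroup_iff' n ℝ).mp hU
  have hconj : (U * A * Uᵀ)ᵀ * (U * diagonal d * Uᵀ) = U * (Aᵀ * diagonal d) * Uᵀ := by
    rw [transpose_mul, transpose_mul, transpose_transpose]
    simp only [Matrix.mul_assoc]
    rw [← Matrix.mul_assoc Uᵀ U, hUU, Matrix.one_mul]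
  rw [sum_mul_eq_trace_transpose_mul, hconj, trace_mul_cycle, hUU, Matrix.one_mul]
  simp [trace, mul_diagonal]

end FrobeniusInner

theorem exists_smul_one_le_of_mem_Dset {κ : ℝ} {p : ℕ} {A : Matrix (Fin p) (Fin p) ℝ}
    (hA : A ∈ Dset κ p) : ∃ m : ℝ, m • 1 ≤ A ∧ A ≤ (κ * m) • 1 := by
  obtain ⟨hpsd, hcond⟩ := hA
  refine ⟨⨅ i, hpsd.1.eigenvalues i, ?_, ?_⟩
  · exact (hpsd.1.smul_one_le_iff _).mpr fun i => ciInf_le (Set.finite_range _).bddBelow i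
  · exact (hpsd.1.le_smul_one_iff _).mpr fun i =>
      (le_ciSup (Set.finite_range _).bddAbove i).trans hcond

theorem mem_Dset_of_smul_one_le {κ m : ℝ} {p : ℕ} {A : Matrix (Fin p) (Fin p) ℝ}
    (hκ : 0 ≤ κ) (hm : 0 ≤ m) (hlo : m • 1 ≤ A) (hhi : A ≤ (κ * m) • 1) : A ∈ Dset κ p := by
  have hpsd : A.PosSemidef := nonneg_iff_posSemidef.mp ((smul_nonneg hm zero_le_one).trans hlo)
  refine ⟨hpsd, ?_⟩
  rcases isEmpty_or_nonempty (Fin p) with hp | hp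
  · simp [Real.iSup_of_isEmpty, Real.iInf_of_isEmpty]
  calc (⨆ i, hpsd.1.eigenvalues i) ≤ κ * m := ciSup_le ((hpsd.1.le_smul_one_iff _).mp hhi)
    _ ≤ κ * ⨅ i, hpsd.1.eigenvalues i :=
      mul_le_mul_of_nonneg_left (le_ciInf ((hpsd.1.smul_one_le_iff _).mp hlo)) hκ

theorem frobNorm_sub_le_of_sum_mul_nonneg {p : ℕ} {X W Y : Matrix (Fin p) (Fin p) ℝ}
    (h : 0 ≤ ∑ i, ∑ j, (Y - X) i j * (X - W) i j) : frobNorm (X - W) ≤ frobNorm (Y - W) := by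
  have hexpand : ∑ i, ∑ j, (Y - W) i j ^ 2 = ∑ i, ∑ j, (Y - X) i j ^ 2
      + 2 * ∑ i, ∑ j, (Y - X) i j * (X - W) i j + ∑ i, ∑ j, (X - W) i j ^ 2 := by
    simp only [Finset.mul_sum, ← Finset.sum_add_distrib, Matrix.sub_apply]
    exact Finset.sum_congr rfl fun i _ => Finset.sum_congr rfl fun j _ => by ring
  have hsq : 0 ≤ ∑ i, ∑ j, (Y - X) i j ^ 2 := by positivity
  exact Real.sqrt_le_sqrt (by linarith)

theorem Fin.sum_univ_add_one_eq_sum_Icc {M : Type*} [AddCommMonoid M] (p : ℕ) (f : ℕ → M) :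
    ∑ i : Fin p, f (i + 1) = ∑ n ∈ Finset.Icc 1 p, f n := by
  rw [Fin.sum_univ_eq_sum_range (fun i => f (i + 1)), Finset.range_eq_Ico, Finset.sum_Ico_add',
    zero_add, Finset.Ico_add_one_right_eq_Icc]

/-- The diagonal entries of `Γ*`, indexed from `1` as in the paper. -/
def truncatedEigenvalue (κ ν : ℝ) (α β : ℕ) (γ : ℕ → ℝ) (n : ℕ) : ℝ :=
  if n ≤ α then κ * ν else if n < β then γ n else ν

def lagrangeWeight (κ ν : ℝ) (α β : ℕ) (γ : ℕ → ℝ) (n : ℕ) : ℝ :=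
  (if n ≤ α then κ * (γ n - κ * ν) else 0) + (if β ≤ n then γ n - ν else 0)

section TruncatedSpectrum

variable {p α β : ℕ} {κ ν : ℝ} {γ : ℕ → ℝ}

theorem truncatedEigenvalue_mem_Icc (hκ : 1 ≤ κ) (hν : 0 ≤ ν) (hγ : AntitoneOn γ (Set.Icc 1 p))
    (hα : γ (α + 1) < κ * ν) (hβ : ν < γ (β - 1)) (hβp : β ≤ p) {n : ℕ}
    (hn : n ∈ Set.Icc 1 p) : truncatedEigenvalue κ ν α β γ n ∈ Set.Icc ν (κ * ν) := by
  obtain ⟨hn1, hnp⟩ := hn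
  unfold truncatedEigenvalue
  split_ifs
  · exact ⟨le_mul_of_one_le_left hν hκ, le_rfl⟩
  · exact ⟨(hβ.trans_le (hγ ⟨hn1, hnp⟩ ⟨by omega, by omega⟩ (by omega))).le,
      ((hγ ⟨by omega, by omega⟩ ⟨hn1, hnp⟩ (by omega)).trans_lt hα).le⟩
  · exact ⟨le_rfl, le_mul_of_one_le_left hν hκ⟩

theorem mul_lagrangeWeight_le (hγ : AntitoneOn γ (Set.Icc 1 p)) (hα : κ * ν ≤ γ α)
    (hβ : γ β ≤ ν) (hαβ : α < β) (hβp : β ≤ p) {n : ℕ} (hn : n ∈ Set.Icc 1 p) {m z : ℝ}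
    (hz : z ∈ Set.Icc m (κ * m)) :
    (ν - m) * lagrangeWeight κ ν α β γ n ≤
      (z - truncatedEigenvalue κ ν α β γ n) * (truncatedEigenvalue κ ν α β γ n - γ n) := by
  obtain ⟨hn1, hnp⟩ := hn
  obtain ⟨hmz, hzm⟩ := hz
  obtain htop | ⟨hαn, hnβ⟩ | hβn : n ≤ α ∨ (α < n ∧ n < β) ∨ β ≤ n := by omega
  · have hγn : γ α ≤ γ n := hγ ⟨hn1, hnp⟩ ⟨by omega, by omega⟩ htop
    simp only [lagrangeWeight, truncatedEigenvalue, htop, show ¬β ≤ n by omega, ↓reduceIte,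
      add_zero]
    nlinarith [mul_nonneg (sub_nonneg.mpr hzm) (sub_nonneg.mpr (hα.trans hγn))]
  · simp [lagrangeWeight, truncatedEigenvalue, hnβ, show ¬n ≤ α by omega,
      show ¬β ≤ n by omega]
  · have hγn : γ n ≤ γ β := hγ ⟨by omega, hβp⟩ ⟨hn1, hnp⟩ hβn
    simp only [lagrangeWeight, truncatedEigenvalue, hβn, show ¬n ≤ α by omega,
      show ¬n < β by omega, ↓reduceIte, zero_add]
    nlinarith [mul_nonneg (sub_nonneg.mpr hmz) (sub_nonneg.mpr (hγn.trans hβ))]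

theorem sum_lagrangeWeight_eq_zero (hαβ : α < β) (hβp : β ≤ p)
    (hν : ν = (κ * (∑ i ∈ Finset.Icc 1 α, γ i) + ∑ i ∈ Finset.Icc β p, γ i) /
      ((α : ℝ) * κ ^ 2 + (p : ℝ) - (β : ℝ) + 1)) :
    ∑ n ∈ Finset.Icc 1 p, lagrangeWeight κ ν α β γ n = 0 := by
  have htop : (Finset.Icc 1 p).filter (· ≤ α) = Finset.Icc 1 α := by
    ext n; simp only [Finset.mem_filter, Finset.mem_Icc]; omega
  have hbot : (Finset.Icc 1 p).filter (β ≤ ·) = Finset.Icc β p := by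
    ext n; simp only [Finset.mem_filter, Finset.mem_Icc]; omega
  have hcard : ((p + 1 - β : ℕ) : ℝ) = p - β + 1 := by
    rw [Nat.cast_sub (by omega)]; push_cast; ring
  have hden : (α : ℝ) * κ ^ 2 + p - β + 1 ≠ 0 := by
    have : (β : ℝ) ≤ p := by exact_mod_cast hβp
    have : 0 ≤ (α : ℝ) * κ ^ 2 := by positivity
    linarith
  have hbalance : ν * ((α : ℝ) * κ ^ 2 + p - β + 1) =
      κ * (∑ i ∈ Finset.Icc 1 α, γ i) + ∑ i ∈ Finset.Icc β p, γ i := by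
    rw [hν, div_mul_cancel₀ _ hden]
  simp only [lagrangeWeight, Finset.sum_add_distrib, ← Finset.sum_filter, htop, hbot,
    Finset.sum_sub_distrib, ← Finset.mul_sum, Finset.sum_const, Nat.card_Icc, nsmul_eq_mul,
    Nat.add_sub_cancel, hcard]
  linear_combination -hbalance

theorem sum_mul_truncatedEigenvalue_nonneg {m : ℝ} (hγ : AntitoneOn γ (Set.Icc 1 p))
    (hα : κ * ν ≤ γ α) (hβ : γ β ≤ ν) (hαβ : α < β) (hβp : β ≤ p)
    (hν : ν = (κ * (∑ i ∈ Finset.Icc 1 α, γ i) + ∑ i ∈ Finset.Icc β p, γ i) /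
      ((α : ℝ) * κ ^ 2 + (p : ℝ) - (β : ℝ) + 1))
    (z : Fin p → ℝ) (hz : ∀ i, z i ∈ Set.Icc m (κ * m)) :
    0 ≤ ∑ i : Fin p, (z i - truncatedEigenvalue κ ν α β γ (i + 1)) *
      (truncatedEigenvalue κ ν α β γ (i + 1) - γ (i + 1)) :=
  calc 0 = (ν - m) * ∑ n ∈ Finset.Icc 1 p, lagrangeWeight κ ν α β γ n := by
        rw [sum_lagrangeWeight_eq_zero hαβ hβp hν, mul_zero]
    _ = ∑ i : Fin p, (ν - m) * lagrangeWeight κ ν α β γ (i + 1) := by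
        rw [Finset.mul_sum, ← Fin.sum_univ_add_one_eq_sum_Icc]
    _ ≤ _ := Finset.sum_le_sum fun i _ =>
        mul_lagrangeWeight_le hγ hα hβ hαβ hβp ⟨by omega, by omega⟩ (hz i)

end TruncatedSpectrum

theorem stmt14_general (p : ℕ) (κ : ℝ) (hκ : 1 ≤ κ) (γ : ℕ → ℝ)
    (hdec : ∀ i j, 1 ≤ i → i ≤ j → j ≤ p → γ j ≤ γ i)
    (hpos : 0 < γ p)
    (U 𝒴 : Matrix (Fin p) (Fin p) ℝ)
    (hU : U ∈ Matrix.orthogonalGroup (Fin p) ℝ)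
    (h𝒴 : 𝒴 = U * Matrix.diagonal (fun i : Fin p => γ (i.1 + 1)) * Uᵀ)
    (α β : ℕ) (hαβ : α < β) (hβp : β ≤ p)
    (νstar : ℝ)
    (hν : νstar = (κ * (∑ i ∈ Finset.Icc 1 α, γ i) + ∑ i ∈ Finset.Icc β p, γ i) /
      ((α : ℝ) * κ ^ 2 + (p : ℝ) - (β : ℝ) + 1))
    (hfenceα : κ * νstar ≤ γ α) (hfenceα' : γ (α + 1) < κ * νstar)
    (hfenceβ : νstar < γ (β - 1)) (hfenceβ' : γ β ≤ νstar)
    (Γstar Ystar : Matrix (Fin p) (Fin p) ℝ)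
    (hΓ : Γstar = Matrix.diagonal (fun i : Fin p =>
      if i.1 + 1 ≤ α then κ * νstar else if i.1 + 1 < β then γ (i.1 + 1) else νstar))
    (hYstar : Ystar = U * Γstar * Uᵀ) :
    Ystar ∈ Dset κ p ∧ ∀ Y ∈ Dset κ p, frobNorm (Ystar - 𝒴) ≤ frobNorm (Y - 𝒴) := by
  have hγ : AntitoneOn γ (Set.Icc 1 p) := fun i hi j hj hij => hdec i j hi.1 hij hj.2
  have hν0 : 0 ≤ νstar := hpos.le.trans ((hdec β p (by omega) hβp le_rfl).trans hfenceβ')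
  set t : Fin p → ℝ := fun i => truncatedEigenvalue κ νstar α β γ (i + 1)
  have hΓt : Γstar = diagonal t := hΓ
  have ht : ∀ i, t i ∈ Set.Icc νstar (κ * νstar) := fun i =>
    truncatedEigenvalue_mem_Icc hκ hν0 hγ hfenceα' hfenceβ hβp ⟨by omega, by omega⟩
  have hUt : Uᵀ ∈ orthogonalGroup (Fin p) ℝ := transpose_mem_unitaryGroup_iff.mpr hU
  refine ⟨?_, fun Y hY => ?_⟩
  · have hlo := smul_one_le_transpose_mul_mul hUt (smul_one_le_diagonal fun i => (ht i).1)
    have hhi := transpose_mul_mul_le_smul_one hUt (diagonal_le_smul_one fun i => (ht i).2)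
    rw [transpose_transpose, ← hΓt, ← hYstar] at hlo hhi
    exact mem_Dset_of_smul_one_le (by linarith) hν0 hlo hhi
  obtain ⟨m, hlo, hhi⟩ := exists_smul_one_le_of_mem_Dset hY
  set Z := Uᵀ * Y * U
  have hZ : ∀ i, Z i i ∈ Set.Icc m (κ * m) := fun i =>
    ⟨by simpa using diag_le_diag_of_le (smul_one_le_transpose_mul_mul hU hlo) i,
      by simpa using diag_le_diag_of_le (transpose_mul_mul_le_smul_one hU hhi) i⟩
  have hUU : U * Uᵀ = 1 := (mem_orthogonalGroup_iff _ ℝ).mp hU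
  have hYZ : Y = U * Z * Uᵀ := by
    simp only [Z, ← Matrix.mul_assoc, hUU, Matrix.one_mul]
    rw [Matrix.mul_assoc, hUU, Matrix.mul_one]
  apply frobNorm_sub_le_of_sum_mul_nonneg
  rw [hYZ, hYstar, h𝒴, ← Matrix.sub_mul, ← Matrix.mul_sub, ← Matrix.sub_mul, ← Matrix.mul_sub,
    hΓt, diagonal_sub, sum_mul_conj_diagonal hU]
  simpa [t] using sum_mul_truncatedEigenvalue_nonneg hγ hfenceα hfenceβ' hαβ hβp hν _ hZ

/-- Proposition 1 (case `γ̂_p > 0`, `γ̂₁/γ̂_p > κ`), matrix form: with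
`𝒴 = U diag(γ̂₁,…,γ̂_p) Uᵀ` and `Γ*` obtained by truncating the top `α` eigenvalues to
`κν*` and the bottom `p − β + 1` eigenvalues to `ν*`, the matrix `Y* = U Γ* Uᵀ` is the
projection of `𝒴` onto the condition-number-constrained positive semidefinite cone `D_κ`. -/
theorem stmt14 (p : ℕ) (κ : ℝ) (hκ : 1 ≤ κ) (γ : ℕ → ℝ)
    (hdec : ∀ i j, 1 ≤ i → i ≤ j → j ≤ p → γ j ≤ γ i)
    (hpos : 0 < γ p) (hspread : κ * γ p < γ 1)
    (U 𝒴 : Matrix (Fin p) (Fin p) ℝ)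
    (hU : U ∈ Matrix.orthogonalGroup (Fin p) ℝ)
    (h𝒴 : 𝒴 = U * Matrix.diagonal (fun i : Fin p => γ (i.1 + 1)) * Uᵀ)
    (α β : ℕ) (hα1 : 1 ≤ α) (hαβ : α < β) (hβp : β ≤ p)
    (νstar : ℝ)
    (hν : νstar = (κ * (∑ i ∈ Finset.Icc 1 α, γ i) + ∑ i ∈ Finset.Icc β p, γ i) /
      ((α : ℝ) * κ ^ 2 + (p : ℝ) - (β : ℝ) + 1))
    (hfenceα : κ * νstar ≤ γ α) (hfenceα' : γ (α + 1) < κ * νstar)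
    (hfenceβ : νstar < γ (β - 1)) (hfenceβ' : γ β ≤ νstar)
    (Γstar Ystar : Matrix (Fin p) (Fin p) ℝ)
    (hΓ : Γstar = Matrix.diagonal (fun i : Fin p =>
      if i.1 + 1 ≤ α then κ * νstar else if i.1 + 1 < β then γ (i.1 + 1) else νstar))
    (hYstar : Ystar = U * Γstar * Uᵀ) :
    Ystar ∈ Dset κ p ∧ ∀ Y ∈ Dset κ p, frobNorm (Ystar - 𝒴) ≤ frobNorm (Y - 𝒴) :=
  stmt14_general p κ hκ γ hdec hpos U 𝒴 hU h𝒴 α β hαβ hβp νstar hν hfenceα hfenceα' hfenceβ hfenceβ'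
    Γstar Ystar hΓ hYstar
end

section
/- (Theorem 2: global convergence of the alternating direction algorithm.) Let κ ≥ 1, λ ≥ 0, μ > 0, and let Σ̃ be a real symmetric p×p matrix. Let (Σ⁰, Y⁰, Λ⁰) be arbitrary real symmetric p×p matrices, and let the sequence (Σᵏ, Yᵏ, Λᵏ)_{k≥0} be generated by: (i) Yᵏ⁺¹ is a minimizer over D_κ of Y ↦ ‖Y − (Σᵏ + μΛᵏ)‖_F; (ii) Σᵏ⁺¹ is the unique minimizer over real symmetric matrices of Σ ↦ (1/2)‖Σ − Σ̃‖_F² + λ‖Σ‖_{1,off} + ⟨Σ − Yᵏ⁺¹, Λᵏ⟩ + (1/(2μ))‖Σ − Yᵏ⁺¹‖_F²; (iii) Λᵏ⁺¹ = Λᵏ + (1/μ)(Σᵏ⁺¹ − Yᵏ⁺¹). Then Σᵏ and Yᵏ both converge in Frobenius norm to the unique minimizer Σ̂* over D_κ of (1/2)‖Σ − Σ̃‖_F² + λ‖Σ‖_{1,off}. -/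
open Matrix BigOperators Filter

/-- Trace inner product `⟨A, B⟩ = tr(Aᵀ B)` on real matrices. -/
noncomputable def trInner {p : ℕ} (A B : Matrix (Fin p) (Fin p) ℝ) : ℝ :=
  (Aᵀ * B).trace

/-!
Transported to `EuclideanSpace ℝ (Fin p × Fin p)`, where `frobNorm` and `trInner` become the
Hilbert-space norm and inner product, the iteration is the alternating direction method of
multipliers for minimising the `1`-strongly convex objective `f` over the closed convex set `D_κ`,
the `Σ`-step ranging over the symmetric matrices. `f` has a unique minimiser `x` on `D_κ`, and
separating the strict epigraph of `f` from `D_κ × (-∞, f x]` yields a dual solution `g`: a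
subgradient of `f` at `x` whose negative lies in the normal cone of `D_κ` at `x`. The optimality
of the two primal steps then shows that `‖μ (Λᵏ + g)‖² + ‖Σᵏ - x‖²` decreases by at least
`μ ‖Σᵏ⁺¹ - x‖² + ‖Σᵏ - Yᵏ⁺¹‖²` per iteration, so both of these tend to `0`.
-/

open Set Topology
open scoped RealInnerProductSpace

lemma tendsto_zero_of_add_le_of_nonneg {W e : ℕ → ℝ} (hW : ∀ k, 0 ≤ W k) (he : ∀ k, 0 ≤ e k)
    (hdesc : ∀ k, W (k + 1) + e k ≤ W k) : Tendsto e atTop (𝓝 0) := by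
  have hanti : Antitone W := antitone_nat_of_succ_le fun k => by linarith [hdesc k, he k]
  have hlim : Tendsto W atTop (𝓝 (⨅ k, W k)) :=
    tendsto_atTop_ciInf hanti ⟨0, by rintro _ ⟨k, rfl⟩; exact hW k⟩
  have hdiff : Tendsto (fun k => W k - W (k + 1)) atTop (𝓝 0) := by
    simpa using hlim.sub (hlim.comp (tendsto_add_atTop_nat 1))
  exact squeeze_zero he (fun k => by linarith [hdesc k]) hdiff

lemma tendsto_of_tendsto_norm_sub_sq {E : Type*} [SeminormedAddCommGroup E] {u : ℕ → E} {x : E}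
    (h : Tendsto (fun k => ‖u k - x‖ ^ 2) atTop (𝓝 0)) : Tendsto u atTop (𝓝 x) := by
  rw [tendsto_iff_norm_sub_tendsto_zero]
  simpa using h.sqrt

lemma exists_isMinOn_half_norm_sub_sq_add {F : Type*} [NormedAddCommGroup F] [ProperSpace F]
    {D : Set F} (hD : IsClosed D) (hne : D.Nonempty) (a : F) {φ : F → ℝ} (hφ : Continuous φ)
    (hφ₀ : ∀ z, 0 ≤ φ z) :
    ∃ x ∈ D, IsMinOn (fun z => 1 / 2 * ‖z - a‖ ^ 2 + φ z) D x := by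
  obtain ⟨x₀, hx₀⟩ := hne
  have hnorm : Tendsto (fun z : F => ‖z - a‖) (cocompact F) atTop :=
    tendsto_atTop_mono (fun z => by simpa [sub_eq_add_neg] using norm_sub_norm_le z a)
      (tendsto_norm_cocompact_atTop.atTop_add (tendsto_const_nhds (x := -‖a‖)))
  have hcoercive : Tendsto (fun z => 1 / 2 * ‖z - a‖ ^ 2 + φ z) (cocompact F) atTop :=
    tendsto_atTop_mono (fun z => le_add_of_nonneg_right (hφ₀ z))
      (((tendsto_pow_atTop two_ne_zero).comp hnorm).const_mul_atTop one_half_pos)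
  exact (by fun_prop : Continuous fun z => 1 / 2 * ‖z - a‖ ^ 2 + φ z).continuousOn.exists_isMinOn'
    hD hx₀ ((hcoercive.eventually_ge_atTop _).filter_mono inf_le_left)

section NormedSpace

variable {F : Type*} [NormedAddCommGroup F] [NormedSpace ℝ F]

lemma StrongConvexOn.add {s : Set F} {m n : ℝ} {f g : F → ℝ}
    (hf : StrongConvexOn s m f) (hg : StrongConvexOn s n g) :
    StrongConvexOn s (m + n) (f + g) := by
  have e : (fun r : ℝ => (m + n) / 2 * r ^ 2) =
      (fun r => m / 2 * r ^ 2) + fun r => n / 2 * r ^ 2 := by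
    funext r
    simp only [Pi.add_apply]
    ring
  unfold StrongConvexOn
  rw [e]
  exact UniformConvexOn.add hf hg

lemma StrongConvexOn.subset {s t : Set F} {m : ℝ} {f : F → ℝ} (hf : StrongConvexOn t m f)
    (hst : s ⊆ t) (hs : Convex ℝ s) : StrongConvexOn s m f :=
  ⟨hs, fun _ hx _ hy => hf.2 (hst hx) (hst hy)⟩

end NormedSpace

section InnerProductSpace

variable {F : Type*} [NormedAddCommGroup F] [InnerProductSpace ℝ F]

lemma convexOn_inner_sub (y u : F) : ConvexOn ℝ univ fun z => ⟪z - y, u⟫ :=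
  (((innerSL ℝ u).toLinearMap.convexOn convex_univ).add_const (-⟪y, u⟫)).congr
    fun z _ => by
      simp only [ContinuousLinearMap.toLinearMap_innerSL_apply, coe_innerₛₗ_apply, Pi.add_apply,
        sub_eq_add_neg, inner_add_left, inner_neg_left, real_inner_comm z u]

lemma strongConvexOn_norm_sub_sq (m : ℝ) (y : F) :
    StrongConvexOn univ m fun z => m / 2 * ‖z - y‖ ^ 2 := by
  rw [strongConvexOn_iff_convex]
  refine ((convexOn_inner_sub 0 (-(m • y))).add_const (m / 2 * ‖y‖ ^ 2)).congr fun z _ => ?_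
  simp only [Pi.add_apply, sub_zero, inner_neg_right, real_inner_smul_right, norm_sub_sq_real]
  ring

lemma StrongConvexOn.add_inner_add_norm_sub_sq {m : ℝ} {f : F → ℝ}
    (hf : StrongConvexOn univ m f) (y u : F) (c : ℝ) :
    StrongConvexOn univ (m + 2 * c) fun z => f z + ⟪z - y, u⟫ + c * ‖z - y‖ ^ 2 := by
  convert (hf.add (strongConvexOn_zero.2 (convexOn_inner_sub y u))).add
    (strongConvexOn_norm_sub_sq (2 * c) y) using 1
  · ring
  · funext z
    simp only [Pi.add_apply]
    ring

lemma StrongConvexOn.add_sq_norm_sub_le_of_isMinOn {s : Set F} {m : ℝ} {f : F → ℝ}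
    (hf : StrongConvexOn s m f) {x y : F} (hx : x ∈ s) (hy : y ∈ s) (hmin : IsMinOn f s x) :
    f x + m / 2 * ‖y - x‖ ^ 2 ≤ f y := by
  have key : ∀ t ∈ Ioc (0 : ℝ) 1, f x + (1 - t) * (m / 2 * ‖y - x‖ ^ 2) ≤ f y := by
    rintro t ⟨ht₀, ht₁⟩
    have hconv := hf.2 hx hy (sub_nonneg.2 ht₁) ht₀.le (by ring)
    have hle := hmin (hf.1 hx hy (sub_nonneg.2 ht₁) ht₀.le (by ring))
    simp only [smul_eq_mul, mem_ofPred_eq, norm_sub_rev x y] at hconv hle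
    nlinarith
  have hlim : Tendsto (fun t : ℝ => f x + (1 - t) * (m / 2 * ‖y - x‖ ^ 2)) (𝓝[>] 0)
      (𝓝 (f x + m / 2 * ‖y - x‖ ^ 2)) := by
    have : Continuous fun t : ℝ => f x + (1 - t) * (m / 2 * ‖y - x‖ ^ 2) := by fun_prop
    simpa using (this.tendsto 0).mono_left nhdsWithin_le_nhds
  refine le_of_tendsto hlim ?_
  filter_upwards [Ioc_mem_nhdsGT (zero_lt_one' ℝ)] with t ht using key t ht

lemma real_inner_sub_le_zero_of_isMinOn {K : Set F} (hK : Convex ℝ K) {u v : F} (hv : v ∈ K)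
    (hmin : IsMinOn (fun w => ‖w - u‖) K v) : ∀ w ∈ K, ⟪u - v, w - v⟫ ≤ 0 := by
  have : Nonempty K := ⟨⟨v, hv⟩⟩
  refine (norm_eq_iInf_iff_real_inner_le_zero hK hv).1 <| le_antisymm
    (le_ciInf fun w => ?_) (ciInf_le (f := fun w : K => ‖u - w‖)
      ⟨0, by rintro _ ⟨w, rfl⟩; exact norm_nonneg _⟩ ⟨v, hv⟩)
  simpa [norm_sub_rev] using hmin w.2

lemma ConvexOn.exists_subgradient_of_isMinOn [CompleteSpace F] {f : F → ℝ}
    (hf : ConvexOn ℝ univ f) (hfc : Continuous f) {D : Set F} (hD : Convex ℝ D) {x : F}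
    (hx : x ∈ D) (hmin : IsMinOn f D x) :
    ∃ g : F, (∀ z, f x + ⟪g, z - x⟫ ≤ f z) ∧ ∀ w ∈ D, 0 ≤ ⟪g, w - x⟫ := by
  set A : Set (F × ℝ) := {q | q.1 ∈ univ ∧ f q.1 < q.2}
  have hA : IsOpen A := by
    simpa [A] using isOpen_lt (hfc.comp continuous_fst) continuous_snd
  have hdisj : Disjoint A (D ×ˢ Iic (f x)) :=
    disjoint_left.2 fun q hqA hqB => (hqA.2.trans_le hqB.2).not_ge (hmin hqB.1)
  obtain ⟨L, c, hLA, hLB⟩ :=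
    geometric_hahn_banach_open hf.convex_strict_epigraph hA (hD.prod (convex_Iic _)) hdisj
  set ℓ : F →L[ℝ] ℝ := L.comp (ContinuousLinearMap.inl ℝ F ℝ)
  set s : ℝ := L (0, 1)
  have hL : ∀ z r, L (z, r) = ℓ z + r * s := fun z r => by
    rw [show (z, r) = (z, (0 : ℝ)) + r • ((0 : F), (1 : ℝ)) by simp, map_add, map_smul,
      smul_eq_mul]
    rfl
  have hgraph : ∀ z, ℓ z + f z * s ≤ c := fun z => by
    have hlim : Tendsto (fun r => L (z, r)) (𝓝[>] f z) (𝓝 (L (z, f z))) :=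
      ((L.continuous.comp (Continuous.prodMk_right z)).tendsto _).mono_left nhdsWithin_le_nhds
    rw [← hL]
    exact le_of_tendsto hlim
      (eventually_nhdsWithin_of_forall fun r hr => (hLA (z, r) ⟨trivial, hr⟩).le)
  have hxB : ∀ w ∈ D, c ≤ ℓ w + f x * s := fun w hw => by
    simpa [hL] using hLB (w, f x) ⟨hw, le_refl (f x)⟩
  have hs : s < 0 := by
    have := hLA (x, f x + 1) ⟨trivial, by linarith⟩
    rw [hL] at this
    linarith [hxB x hx]
  have hinner : ∀ z, ⟪(-s)⁻¹ • (InnerProductSpace.toDual ℝ F).symm ℓ, z - x⟫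
      = (ℓ z - ℓ x) / (-s) := fun z => by
    rw [real_inner_smul_left, InnerProductSpace.toDual_symm_apply, map_sub, inv_mul_eq_div]
  refine ⟨(-s)⁻¹ • (InnerProductSpace.toDual ℝ F).symm ℓ, fun z => ?_, fun w hw => ?_⟩
  · rw [hinner, ← le_sub_iff_add_le', div_le_iff₀ (neg_pos.2 hs)]
    nlinarith [hgraph z, hxB x hx]
  · rw [hinner]
    exact div_nonneg (by linarith [hgraph x, hxB w hw]) (neg_pos.2 hs).le

/-- Iterates of the alternating direction method of multipliers for minimising `f s` subject to
`s = y`, `s ∈ S`, `y ∈ D`, with penalty parameter `μ` and multiplier `Λ`. -/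
structure IsADMMSeq (f : F → ℝ) (S D : Set F) (μ : ℝ) (s y Λ : ℕ → F) : Prop where
  y_mem : ∀ k, y (k + 1) ∈ D
  isMinOn_y : ∀ k, IsMinOn (fun w => ‖w - (s k + μ • Λ k)‖) D (y (k + 1))
  s_mem : ∀ k, s (k + 1) ∈ S
  isMinOn_s : ∀ k, IsMinOn
    (fun z => f z + ⟪z - y (k + 1), Λ k⟫ + 1 / (2 * μ) * ‖z - y (k + 1)‖ ^ 2) S (s (k + 1))
  Λ_succ : ∀ k, Λ (k + 1) = Λ k + μ⁻¹ • (s (k + 1) - y (k + 1))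

/-- In `IsADMMSeq.lyapunov_le` this is applied to `a = sᵏ - x`, `a' = sᵏ⁺¹ - x`,
`c = yᵏ⁺¹ - x` and `B = μ (Λᵏ + g)`. -/
lemma norm_add_sub_sq_add_le {a a' c B : F} {τ : ℝ}
    (h₁ : 2 * ⟪a', B⟫ + ‖a' - c‖ ^ 2 + τ * ‖a'‖ ^ 2 ≤ ‖c‖ ^ 2)
    (h₂ : ‖c‖ ^ 2 - ⟪a, c⟫ ≤ ⟪B, c⟫) :
    ‖B + (a' - c)‖ ^ 2 + τ * ‖a'‖ ^ 2 + ‖a - c‖ ^ 2 ≤ ‖B‖ ^ 2 + ‖a‖ ^ 2 := by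
  rw [real_inner_comm] at h₁
  rw [norm_add_sq_real, inner_sub_right, norm_sub_sq_real a c]
  linarith

namespace IsADMMSeq

variable {f : F → ℝ} {S D : Set F} {μ m : ℝ} {s y Λ : ℕ → F}

lemma lyapunov_le (h : IsADMMSeq f S D μ s y Λ) (hμ : 0 < μ) (hf : StrongConvexOn univ m f)
    (hS : Convex ℝ S) (hD : Convex ℝ D) (hDS : D ⊆ S) {x g : F} (hx : x ∈ D)
    (hg : ∀ z, f x + ⟪g, z - x⟫ ≤ f z) (hgD : ∀ w ∈ D, 0 ≤ ⟪g, w - x⟫) (k : ℕ) :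
    ‖μ • (Λ (k + 1) + g)‖ ^ 2 + (μ * m + 1) * ‖s (k + 1) - x‖ ^ 2 + ‖s k - y (k + 1)‖ ^ 2 ≤
      ‖μ • (Λ k + g)‖ ^ 2 + ‖s k - x‖ ^ 2 := by
  set a := s k - x
  set a' := s (k + 1) - x
  set c := y (k + 1) - x
  have h₁ : 2 * ⟪a', μ • (Λ k + g)⟫ + ‖a' - c‖ ^ 2 + (μ * m + 1) * ‖a'‖ ^ 2 ≤ ‖c‖ ^ 2 := by
    have hG := (hf.add_inner_add_norm_sub_sq (y (k + 1)) (Λ k) (1 / (2 * μ))).subset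
      (subset_univ S) hS
    have hgrowth := hG.add_sq_norm_sub_le_of_isMinOn (h.s_mem k) (hDS hx) (h.isMinOn_s k)
    have hsub := hg (s (k + 1))
    have e₁ : a' - c = s (k + 1) - y (k + 1) := by simp only [a', c]; abel
    have e₂ : ⟪a', μ • (Λ k + g)⟫ = μ * (⟪s (k + 1) - y (k + 1), Λ k⟫ - ⟪x - y (k + 1), Λ k⟫
        + ⟪g, s (k + 1) - x⟫) := by
      rw [← inner_sub_left, sub_sub_sub_cancel_right, inner_smul_right, inner_add_right,
        real_inner_comm g]
    rw [e₁, e₂, norm_sub_rev (y (k + 1)) x]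
    rw [norm_sub_rev x] at hgrowth
    field_simp at hgrowth
    linear_combination hgrowth + 2 * μ * hsub
  have h₂ : ‖c‖ ^ 2 - ⟪a, c⟫ ≤ ⟪μ • (Λ k + g), c⟫ := by
    have hproj := real_inner_sub_le_zero_of_isMinOn hD (h.y_mem k) (h.isMinOn_y k) x hx
    have hnormal : 0 ≤ ⟪g, c⟫ := hgD _ (h.y_mem k)
    have e₁ : s k + μ • Λ k - y (k + 1) = (a - c) + μ • Λ k := by simp only [a, c]; abel
    have e₂ : x - y (k + 1) = -c := by simp only [c]; abel
    rw [e₁, e₂, inner_neg_right, inner_add_left, inner_sub_left, real_inner_self_eq_norm_sq,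
      real_inner_smul_left] at hproj
    rw [real_inner_smul_left, inner_add_left]
    nlinarith [mul_nonneg hμ.le hnormal]
  have hΛ : μ • (Λ (k + 1) + g) = μ • (Λ k + g) + (a' - c) := by
    rw [h.Λ_succ, smul_add, smul_add, smul_add, smul_inv_smul₀ hμ.ne']
    simp only [a', c]
    abel
  have e : a - c = s k - y (k + 1) := by simp only [a, c]; abel
  rw [hΛ, ← e]
  exact norm_add_sub_sq_add_le h₁ h₂

theorem tendsto [CompleteSpace F] (h : IsADMMSeq f S D μ s y Λ) (hμ : 0 < μ) (hm : 0 < m)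
    (hf : StrongConvexOn univ m f) (hfc : Continuous f) (hS : Convex ℝ S) (hD : Convex ℝ D)
    (hDS : D ⊆ S) {x : F} (hx : x ∈ D) (hmin : IsMinOn f D x) :
    Tendsto s atTop (𝓝 x) ∧ Tendsto y atTop (𝓝 x) := by
  obtain ⟨g, hg, hgD⟩ := (hf.convexOn fun r => by positivity).exists_subgradient_of_isMinOn
    hfc hD hx hmin
  have hdecrease : Tendsto (fun k => μ * m * ‖s (k + 1) - x‖ ^ 2 + ‖s k - y (k + 1)‖ ^ 2)
      atTop (𝓝 0) := by
    refine tendsto_zero_of_add_le_of_nonneg (W := fun k => ‖μ • (Λ k + g)‖ ^ 2 + ‖s k - x‖ ^ 2)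
      (fun k => by positivity) (fun k => by positivity) fun k => ?_
    linarith [h.lyapunov_le hμ hf hS hD hDS hx hg hgD k]
  have hs : Tendsto (fun k => s (k + 1)) atTop (𝓝 x) := by
    refine tendsto_of_tendsto_norm_sub_sq (squeeze_zero (fun k => by positivity) (fun k => ?_)
      (by simpa using hdecrease.div_const (μ * m)))
    rw [le_div_iff₀ (by positivity)]
    nlinarith [sq_nonneg ‖s k - y (k + 1)‖]
  have hsy : Tendsto (fun k => s k - y (k + 1)) atTop (𝓝 0) := by
    refine tendsto_of_tendsto_norm_sub_sq (squeeze_zero (fun k => by positivity) (fun k => ?_)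
      hdecrease)
    rw [sub_zero]
    nlinarith [sq_nonneg ‖s (k + 1) - x‖, mul_pos hμ hm]
  have hs' := (tendsto_add_atTop_iff_nat 1).1 hs
  refine ⟨hs', (tendsto_add_atTop_iff_nat 1).1 ?_⟩
  simpa using hs'.sub hsy

end IsADMMSeq

end InnerProductSpace

namespace Matrix.IsHermitian

variable {n : Type*} [Fintype n] [DecidableEq n] {A : Matrix n n ℝ}

lemma posSemidef_smul_one_add_smul_iff (hA : A.IsHermitian) (a b : ℝ) :
    (a • 1 + b • A).PosSemidef ↔ ∀ i, 0 ≤ a + b * hA.eigenvalues i := by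
  conv_lhs => rw [hA.spectral_theorem]
  rw [show a • (1 : Matrix n n ℝ) = Unitary.conjStarAlgAut ℝ _ hA.eigenvectorUnitary (a • 1) by
    simp, ← map_smul, ← map_add, Unitary.conjStarAlgAut_apply,
    Unitary.isUnit_coe.posSemidef_star_right_conjugate_iff, ← diagonal_one, ← diagonal_smul,
    ← diagonal_smul, diagonal_add, posSemidef_diagonal_iff]
  simp

lemma dotProduct_mulVec_le_iSup_eigenvalues (hA : A.IsHermitian) (v : n → ℝ) :
    v ⬝ᵥ A *ᵥ v ≤ (⨆ i, hA.eigenvalues i) * (v ⬝ᵥ v) := by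
  have hle : ∀ i, 0 ≤ (⨆ i, hA.eigenvalues i) + -1 * hA.eigenvalues i := fun i => by
    simpa using le_ciSup (Finite.bddAbove_range hA.eigenvalues) i
  have := ((hA.posSemidef_smul_one_add_smul_iff _ _).2 hle).dotProduct_mulVec_nonneg v
  simp only [star_trivial, add_mulVec, smul_mulVec, one_mulVec, dotProduct_add,
    dotProduct_smul, smul_eq_mul] at this
  linarith

lemma iInf_eigenvalues_mul_le_dotProduct_mulVec (hA : A.IsHermitian) (v : n → ℝ) :
    (⨅ i, hA.eigenvalues i) * (v ⬝ᵥ v) ≤ v ⬝ᵥ A *ᵥ v := by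
  have hle : ∀ i, 0 ≤ -(⨅ i, hA.eigenvalues i) + 1 * hA.eigenvalues i := fun i => by
    simpa [add_comm] using ciInf_le (Finite.bddBelow_range hA.eigenvalues) i
  have := ((hA.posSemidef_smul_one_add_smul_iff _ _).2 hle).dotProduct_mulVec_nonneg v
  simp only [star_trivial, add_mulVec, smul_mulVec, one_mulVec, dotProduct_add,
    dotProduct_smul, smul_eq_mul] at this
  linarith

lemma eigenvectorBasis_dotProduct_self (hA : A.IsHermitian) (i : n) :
    ⇑(hA.eigenvectorBasis i) ⬝ᵥ ⇑(hA.eigenvectorBasis i) = 1 := by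
  have h := real_inner_self_eq_norm_sq (hA.eigenvectorBasis i)
  rw [hA.eigenvectorBasis.orthonormal.1 i, EuclideanSpace.inner_eq_star_dotProduct] at h
  simpa using h

lemma eigenvalues_eq_dotProduct (hA : A.IsHermitian) (i : n) :
    hA.eigenvalues i = ⇑(hA.eigenvectorBasis i) ⬝ᵥ A *ᵥ ⇑(hA.eigenvectorBasis i) := by
  simpa using hA.eigenvalues_eq i

end Matrix.IsHermitian

lemma dotProduct_smul_add_smul_mulVec {n : Type*} [Fintype n] (A B : Matrix n n ℝ) (a b : ℝ)
    (v : n → ℝ) :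
    v ⬝ᵥ (a • A + b • B) *ᵥ v = a * (v ⬝ᵥ A *ᵥ v) + b * (v ⬝ᵥ B *ᵥ v) := by
  simp only [add_mulVec, smul_mulVec, dotProduct_add, dotProduct_smul, smul_eq_mul]

lemma convex_setOf_isHermitian {n : Type*} : Convex ℝ {A : Matrix n n ℝ | A.IsHermitian} :=
  fun _ hA _ hB a b _ _ _ => (hA.smul (IsSelfAdjoint.all a)).add (hB.smul (IsSelfAdjoint.all b))

section Dset

variable {κ : ℝ} {p : ℕ}

lemma mem_Dset_iff (hκ : 0 ≤ κ) {A : Matrix (Fin p) (Fin p) ℝ} :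
    A ∈ Dset κ p ↔ A.IsHermitian ∧ (∀ v, 0 ≤ v ⬝ᵥ A *ᵥ v) ∧
      ∀ v w, (w ⬝ᵥ w) * (v ⬝ᵥ A *ᵥ v) ≤ κ * ((v ⬝ᵥ v) * (w ⬝ᵥ A *ᵥ w)) := by
  simp only [Dset, mem_ofPred_eq, posSemidef_iff_dotProduct_mulVec, star_trivial]
  refine ⟨fun ⟨⟨hA, hnonneg⟩, hle⟩ => ⟨hA, hnonneg, fun v w => ?_⟩,
    fun ⟨hA, hnonneg, hratio⟩ => ⟨⟨hA, hnonneg⟩, ?_⟩⟩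
  · have hv := hA.dotProduct_mulVec_le_iSup_eigenvalues v
    have hw := hA.iInf_eigenvalues_mul_le_dotProduct_mulVec w
    have hinf : 0 ≤ ⨅ i, hA.eigenvalues i := Real.iInf_nonneg fun i => by
      simpa [hA.eigenvalues_eq_dotProduct] using hnonneg _
    have hvv : 0 ≤ v ⬝ᵥ v := by simpa using dotProduct_self_star_nonneg v
    have hww : 0 ≤ w ⬝ᵥ w := by simpa using dotProduct_self_star_nonneg w
    calc (w ⬝ᵥ w) * (v ⬝ᵥ A *ᵥ v) ≤ (w ⬝ᵥ w) * ((⨆ i, hA.eigenvalues i) * (v ⬝ᵥ v)) := by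
          gcongr
      _ ≤ (w ⬝ᵥ w) * (κ * (⨅ i, hA.eigenvalues i) * (v ⬝ᵥ v)) := by gcongr
      _ = κ * ((v ⬝ᵥ v) * ((⨅ i, hA.eigenvalues i) * (w ⬝ᵥ w))) := by ring
      _ ≤ κ * ((v ⬝ᵥ v) * (w ⬝ᵥ A *ᵥ w)) := by gcongr
  · rcases isEmpty_or_nonempty (Fin p) with hp | hp
    · simp
    obtain ⟨j, hj⟩ := exists_eq_ciInf_of_finite (f := hA.eigenvalues)
    rw [← hj]
    refine ciSup_le fun i => ?_
    simpa [← hA.eigenvalues_eq_dotProduct, hA.eigenvectorBasis_dotProduct_self] using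
      hratio (hA.eigenvectorBasis i) (hA.eigenvectorBasis j)

lemma convex_Dset (hκ : 0 ≤ κ) : Convex ℝ (Dset κ p) := by
  intro A hA B hB a b ha hb _
  rw [mem_Dset_iff hκ] at hA hB ⊢
  obtain ⟨hA, hA₀, hA₁⟩ := hA
  obtain ⟨hB, hB₀, hB₁⟩ := hB
  refine ⟨convex_setOf_isHermitian hA hB ha hb ‹_›, fun v => ?_, fun v w => ?_⟩
  · rw [dotProduct_smul_add_smul_mulVec]
    have := hA₀ v
    have := hB₀ v
    positivity
  · rw [dotProduct_smul_add_smul_mulVec, dotProduct_smul_add_smul_mulVec]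
    nlinarith [mul_le_mul_of_nonneg_left (hA₁ v w) ha, mul_le_mul_of_nonneg_left (hB₁ v w) hb]

lemma isClosed_Dset (hκ : 0 ≤ κ) : IsClosed (Dset κ p) := by
  have hq : ∀ v : Fin p → ℝ, Continuous fun A : Matrix (Fin p) (Fin p) ℝ => v ⬝ᵥ A *ᵥ v :=
    fun v => continuous_const.dotProduct (continuous_id.matrix_mulVec continuous_const)
  rw [show Dset κ p = {A | _} from Set.ext fun A => mem_Dset_iff hκ]
  simp only [ofPred_and, ofPred_forall]
  exact (isClosed_eq continuous_id.matrix_conjTranspose continuous_id).inter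
    ((isClosed_iInter fun v => isClosed_le continuous_const (hq v)).inter
      (isClosed_iInter fun v => isClosed_iInter fun w =>
        isClosed_le (continuous_const.mul (hq v)) (continuous_const.mul
          (continuous_const.mul (hq w)))))

lemma zero_mem_Dset (hκ : 0 ≤ κ) : (0 : Matrix (Fin p) (Fin p) ℝ) ∈ Dset κ p := by
  simp [mem_Dset_iff hκ]

end Dset

noncomputable def Matrix.toEuclideanSpace (m n : Type*) [Fintype m] [Fintype n] :
    Matrix m n ℝ ≃ₗ[ℝ] EuclideanSpace ℝ (m × n) where
  toFun A := WithLp.toLp 2 fun ij => A ij.1 ij.2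
  invFun x := Matrix.of fun i j => x (i, j)
  map_add' _ _ := rfl
  map_smul' _ _ := rfl
  left_inv _ := rfl
  right_inv _ := rfl

@[simp] lemma Matrix.toEuclideanSpace_apply {m n : Type*} [Fintype m] [Fintype n]
    (A : Matrix m n ℝ) (ij : m × n) : toEuclideanSpace m n A ij = A ij.1 ij.2 := rfl

lemma Matrix.continuous_toEuclideanSpace_symm {m n : Type*} [Fintype m] [Fintype n] :
    Continuous (toEuclideanSpace m n).symm :=
  (toEuclideanSpace m n).symm.toLinearMap.continuous_of_finiteDimensional

section Frobenius

variable {p : ℕ}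

lemma frobNorm_eq_norm (A : Matrix (Fin p) (Fin p) ℝ) :
    frobNorm A = ‖toEuclideanSpace (Fin p) (Fin p) A‖ := by
  simp [frobNorm, EuclideanSpace.norm_eq, Fintype.sum_prod_type]

lemma trInner_eq_inner (A B : Matrix (Fin p) (Fin p) ℝ) :
    trInner A B = ⟪toEuclideanSpace (Fin p) (Fin p) A, toEuclideanSpace (Fin p) (Fin p) B⟫ := by
  simp only [trInner, Matrix.trace, Matrix.diag_apply, Matrix.mul_apply, Matrix.transpose_apply,
    PiLp.inner_apply, toEuclideanSpace_apply, RCLike.inner_apply, conj_trivial,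
    Fintype.sum_prod_type]
  rw [Finset.sum_comm]
  simp only [mul_comm]

lemma convexOn_offL1 : ConvexOn ℝ univ (offL1 (p := p)) := by
  refine ⟨convex_univ, fun A _ B _ a b ha hb _ => ?_⟩
  simp only [offL1, smul_eq_mul, Finset.mul_sum, ← Finset.sum_add_distrib]
  gcongr with i _ j _
  split_ifs
  · calc |(a • A + b • B) i j| ≤ |a * A i j| + |b * B i j| := abs_add_le _ _
      _ = a * |A i j| + b * |B i j| := by rw [abs_mul, abs_mul, abs_of_nonneg ha, abs_of_nonneg hb]
  · simp

lemma offL1_nonneg (A : Matrix (Fin p) (Fin p) ℝ) : 0 ≤ offL1 A :=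
  Finset.sum_nonneg fun _ _ => Finset.sum_nonneg fun _ _ => by split_ifs <;> simp

lemma continuous_offL1 : Continuous (offL1 (p := p)) := by
  refine continuous_finsetSum _ fun i _ => continuous_finsetSum _ fun j _ => ?_
  split_ifs
  · exact ((continuous_apply j).comp (continuous_apply i)).abs
  · exact continuous_const

end Frobenius

noncomputable def penalizedLoss {p : ℕ} (Stilde : Matrix (Fin p) (Fin p) ℝ) (lam : ℝ)
    (A : Matrix (Fin p) (Fin p) ℝ) : ℝ :=
  1 / 2 * frobNorm (A - Stilde) ^ 2 + lam * offL1 A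

section PenalizedLoss

variable {p : ℕ} (Stilde : Matrix (Fin p) (Fin p) ℝ) {lam : ℝ}

lemma penalizedLoss_comp_symm (x : EuclideanSpace ℝ (Fin p × Fin p)) :
    penalizedLoss Stilde lam ((toEuclideanSpace (Fin p) (Fin p)).symm x) =
      1 / 2 * ‖x - toEuclideanSpace (Fin p) (Fin p) Stilde‖ ^ 2 +
        lam * offL1 ((toEuclideanSpace (Fin p) (Fin p)).symm x) := by
  simp [penalizedLoss, frobNorm_eq_norm]

lemma strongConvexOn_penalizedLoss (hlam : 0 ≤ lam) :
    StrongConvexOn univ 1 (penalizedLoss Stilde lam ∘ (toEuclideanSpace (Fin p) (Fin p)).symm) := by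
  have h := (strongConvexOn_norm_sub_sq 1 (toEuclideanSpace (Fin p) (Fin p) Stilde)).add
    (strongConvexOn_zero.2 ((convexOn_offL1.comp_linearMap
      (toEuclideanSpace (Fin p) (Fin p)).symm.toLinearMap).smul hlam))
  simpa [Function.comp_def, penalizedLoss_comp_symm, Pi.add_def] using h

lemma continuous_penalizedLoss :
    Continuous (penalizedLoss Stilde lam ∘ (toEuclideanSpace (Fin p) (Fin p)).symm) := by
  rw [show _ ∘ _ = _ from funext (penalizedLoss_comp_symm Stilde)]
  exact (continuous_const.mul ((continuous_id.sub continuous_const).norm.pow 2)).add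
    (continuous_const.mul (continuous_offL1.comp continuous_toEuclideanSpace_symm))

lemma exists_isMinOn_penalizedLoss {κ : ℝ} (hκ : 0 ≤ κ) (hlam : 0 ≤ lam) :
    ∃ x ∈ (toEuclideanSpace (Fin p) (Fin p)).symm ⁻¹' Dset κ p,
      IsMinOn (penalizedLoss Stilde lam ∘ (toEuclideanSpace (Fin p) (Fin p)).symm)
        ((toEuclideanSpace (Fin p) (Fin p)).symm ⁻¹' Dset κ p) x := by
  simp only [Function.comp_def, penalizedLoss_comp_symm]
  exact exists_isMinOn_half_norm_sub_sq_add
    ((isClosed_Dset hκ).preimage continuous_toEuclideanSpace_symm)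
    ⟨0, by simpa using zero_mem_Dset hκ⟩ _
    (continuous_const.mul (continuous_offL1.comp continuous_toEuclideanSpace_symm))
    fun x => mul_nonneg hlam (offL1_nonneg _)

end PenalizedLoss

theorem stmt16_general (p : ℕ) (κ lam μ : ℝ) (hκ : 1 ≤ κ) (hlam : 0 ≤ lam) (hμ : 0 < μ)
    (Stilde : Matrix (Fin p) (Fin p) ℝ)
    (Sseq Yseq Λseq : ℕ → Matrix (Fin p) (Fin p) ℝ)
    (hYstep : ∀ k : ℕ, Yseq (k + 1) ∈ Dset κ p ∧
      ∀ W ∈ Dset κ p, frobNorm (Yseq (k + 1) - (Sseq k + μ • Λseq k)) ≤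
        frobNorm (W - (Sseq k + μ • Λseq k)))
    (hSstep : ∀ k : ℕ, (Sseq (k + 1)).IsHermitian ∧
      ∀ S : Matrix (Fin p) (Fin p) ℝ, S.IsHermitian →
        (1 / 2) * (frobNorm (Sseq (k + 1) - Stilde)) ^ 2 + lam * offL1 (Sseq (k + 1)) +
            trInner (Sseq (k + 1) - Yseq (k + 1)) (Λseq k) +
            (1 / (2 * μ)) * (frobNorm (Sseq (k + 1) - Yseq (k + 1))) ^ 2 ≤
          (1 / 2) * (frobNorm (S - Stilde)) ^ 2 + lam * offL1 S +
            trInner (S - Yseq (k + 1)) (Λseq k) +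
            (1 / (2 * μ)) * (frobNorm (S - Yseq (k + 1))) ^ 2)
    (hΛstep : ∀ k : ℕ, Λseq (k + 1) = Λseq k + μ⁻¹ • (Sseq (k + 1) - Yseq (k + 1))) :
    ∃ Shat : Matrix (Fin p) (Fin p) ℝ,
      Shat ∈ Dset κ p ∧
      (∀ S ∈ Dset κ p,
        (1 / 2) * (frobNorm (Shat - Stilde)) ^ 2 + lam * offL1 Shat ≤
          (1 / 2) * (frobNorm (S - Stilde)) ^ 2 + lam * offL1 S) ∧
      (∀ S' ∈ Dset κ p,
        (∀ S ∈ Dset κ p,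
          (1 / 2) * (frobNorm (S' - Stilde)) ^ 2 + lam * offL1 S' ≤
            (1 / 2) * (frobNorm (S - Stilde)) ^ 2 + lam * offL1 S) → S' = Shat) ∧
      Tendsto (fun k => frobNorm (Sseq k - Shat)) atTop (nhds 0) ∧
      Tendsto (fun k => frobNorm (Yseq k - Shat)) atTop (nhds 0) := by
  set e := toEuclideanSpace (Fin p) (Fin p)
  have hκ₀ : 0 ≤ κ := zero_le_one.trans hκ
  have hf := strongConvexOn_penalizedLoss Stilde hlam
  have hD : Convex ℝ (e.symm ⁻¹' Dset κ p) := (convex_Dset hκ₀).linear_preimage _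
  obtain ⟨x, hxD, hxmin⟩ := exists_isMinOn_penalizedLoss Stilde hκ₀ hlam
  have hADMM : IsADMMSeq (penalizedLoss Stilde lam ∘ e.symm) (e.symm ⁻¹' {A | A.IsHermitian})
      (e.symm ⁻¹' Dset κ p) μ (e ∘ Sseq) (e ∘ Yseq) (e ∘ Λseq) :=
    ⟨fun k => by simpa [e] using (hYstep k).1,
      fun k w hw => by simpa [e, frobNorm_eq_norm] using (hYstep k).2 (e.symm w) hw,
      fun k => by simpa [e] using (hSstep k).1,
      fun k z hz => by
        simpa [e, penalizedLoss, frobNorm_eq_norm, trInner_eq_inner] using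
          (hSstep k).2 (e.symm z) hz,
      fun k => by simp [e, hΛstep]⟩
  obtain ⟨hS, hY⟩ := hADMM.tendsto hμ one_pos hf (continuous_penalizedLoss Stilde)
    (convex_setOf_isHermitian.linear_preimage _) hD (preimage_mono fun A hA => hA.1.1) hxD hxmin
  refine ⟨e.symm x, hxD, fun S hS => ?_, fun S' hS' hmin => ?_, ?_, ?_⟩
  · simpa [e, penalizedLoss] using hxmin (show e S ∈ _ by simpa [e] using hS)
  · have hmin' : IsMinOn (penalizedLoss Stilde lam ∘ e.symm) (e.symm ⁻¹' Dset κ p) (e S') :=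
      fun z hz => by simpa [e, penalizedLoss] using hmin _ hz
    have := ((hf.strictConvexOn one_pos).subset (subset_univ _) hD).eq_of_isMinOn
      hmin' hxmin (by simpa [e] using hS') hxD
    simpa [e] using congrArg e.symm this
  · simpa [e, frobNorm_eq_norm] using tendsto_iff_norm_sub_tendsto_zero.1 hS
  · simpa [e, frobNorm_eq_norm] using tendsto_iff_norm_sub_tendsto_zero.1 hY

/-- Theorem 2: global convergence of the alternating direction algorithm. From any
symmetric starting point, the iterates `Σᵏ` and `Yᵏ` converge in Frobenius norm to the
unique minimizer of `½‖Σ − Σ̃‖_F² + λ‖Σ‖₁,off` over `D_κ`. -/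
theorem stmt16 (p : ℕ) (κ lam μ : ℝ) (hκ : 1 ≤ κ) (hlam : 0 ≤ lam) (hμ : 0 < μ)
    (Stilde : Matrix (Fin p) (Fin p) ℝ) (hStilde : Stilde.IsHermitian)
    (Sseq Yseq Λseq : ℕ → Matrix (Fin p) (Fin p) ℝ)
    (hS0 : (Sseq 0).IsHermitian) (hY0 : (Yseq 0).IsHermitian) (hΛ0 : (Λseq 0).IsHermitian)
    (hYstep : ∀ k : ℕ, Yseq (k + 1) ∈ Dset κ p ∧
      ∀ W ∈ Dset κ p, frobNorm (Yseq (k + 1) - (Sseq k + μ • Λseq k)) ≤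
        frobNorm (W - (Sseq k + μ • Λseq k)))
    (hSstep : ∀ k : ℕ, (Sseq (k + 1)).IsHermitian ∧
      ∀ S : Matrix (Fin p) (Fin p) ℝ, S.IsHermitian →
        (1 / 2) * (frobNorm (Sseq (k + 1) - Stilde)) ^ 2 + lam * offL1 (Sseq (k + 1)) +
            trInner (Sseq (k + 1) - Yseq (k + 1)) (Λseq k) +
            (1 / (2 * μ)) * (frobNorm (Sseq (k + 1) - Yseq (k + 1))) ^ 2 ≤
          (1 / 2) * (frobNorm (S - Stilde)) ^ 2 + lam * offL1 S +
            trInner (S - Yseq (k + 1)) (Λseq k) +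
            (1 / (2 * μ)) * (frobNorm (S - Yseq (k + 1))) ^ 2)
    (hΛstep : ∀ k : ℕ, Λseq (k + 1) = Λseq k + μ⁻¹ • (Sseq (k + 1) - Yseq (k + 1))) :
    ∃ Shat : Matrix (Fin p) (Fin p) ℝ,
      Shat ∈ Dset κ p ∧
      (∀ S ∈ Dset κ p,
        (1 / 2) * (frobNorm (Shat - Stilde)) ^ 2 + lam * offL1 Shat ≤
          (1 / 2) * (frobNorm (S - Stilde)) ^ 2 + lam * offL1 S) ∧
      (∀ S' ∈ Dset κ p,
        (∀ S ∈ Dset κ p,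
          (1 / 2) * (frobNorm (S' - Stilde)) ^ 2 + lam * offL1 S' ≤
            (1 / 2) * (frobNorm (S - Stilde)) ^ 2 + lam * offL1 S) → S' = Shat) ∧
      Tendsto (fun k => frobNorm (Sseq k - Shat)) atTop (nhds 0) ∧
      Tendsto (fun k => frobNorm (Yseq k - Shat)) atTop (nhds 0) :=
  stmt16_general p κ lam μ hκ hlam hμ Stilde Sseq Yseq Λseq hYstep hSstep hΛstep
end
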